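/- arXiv:2509.20316 — 3 statements merged into one kernel-verified Lean document; each statement's English description precedes it below -/
import Mathlib

section
/- The Schur polynomials A_m satisfy A₀ = 1, A₁ = 1, and the second-order recurrence A_m = A_{m−1} + q^{m−1} A_{m−2} for all m ≥ 2, as an identity of polynomials in ℤ[q]. -/
/-!
Write `t m n = q^{n²} [m-n choose n]_q` for the summands of `A_m`. The `q`-Pascal rule
`[r+1 choose n+1] = [r choose n+1] + q^{r-n} [r choose n]` with `r = m-n-1` gives
`t (m+2) (n+1) = t (m+1) (n+1) + q^{m+1} t m n`, because `(n+1)² + (m-2n) = n² + m + 1`;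
summing over `n` yields the recurrence. The Pascal rule itself is checked after multiplying
by the nonzero denominators `(q;q)_{n+1} (q;q)_{r-n}` in the domain `ℤ⟦q⟧`.
-/

noncomputable section

open PowerSeries Finset

/-- `(q;q)_n = ∏_{j=1}^n (1 - q^j)` in `ℤ⟦q⟦` (it is a polynomial). -/
def qqPoch (n : ℕ) : PowerSeries ℤ :=
  ∏ j ∈ Finset.range n, (1 - (PowerSeries.X : PowerSeries ℤ) ^ (j + 1))

/-- The Gaussian binomial coefficient `[r choose n]_q = (q;q)_r/((q;q)_n (q;q)_{r-n})`
for `0 ≤ n ≤ r`, and `0` otherwise.  The denominator has constant term `1`, so it is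
inverted via `PowerSeries.invOfUnit`; the quotient is in fact a polynomial. -/
def qBinom (r n : ℕ) : PowerSeries ℤ :=
  if n ≤ r then qqPoch r * PowerSeries.invOfUnit (qqPoch n * qqPoch (r - n)) 1 else 0

/-- The Schur polynomial `A_m(q) = Σ_{n≥0} q^{n²} [m−n choose n]_q`
(the terms with `2n > m` vanish). -/
def schurA (m : ℕ) : PowerSeries ℤ :=
  ∑ n ∈ Finset.range (m + 1), (PowerSeries.X : PowerSeries ℤ) ^ (n ^ 2) * qBinom (m - n) n

lemma constantCoeff_qqPoch (n : ℕ) : constantCoeff (qqPoch n) = 1 := by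
  simp [qqPoch, map_prod]

lemma qqPoch_ne_zero (n : ℕ) : qqPoch n ≠ 0 := fun h ↦ by
  simpa [h] using constantCoeff_qqPoch n

lemma qqPoch_zero : qqPoch 0 = 1 := by
  simp [qqPoch]

lemma qqPoch_succ (n : ℕ) : qqPoch (n + 1) = qqPoch n * (1 - X ^ (n + 1)) := by
  simp [qqPoch, prod_range_succ]

lemma qqPoch_mul_qqPoch_mul_qBinom {k l r : ℕ} (h : k + l = r) :
    qqPoch k * qqPoch l * qBinom r k = qqPoch r := by
  subst h
  rw [qBinom, if_pos (Nat.le_add_right k l), Nat.add_sub_cancel_left, mul_left_comm,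
    mul_invOfUnit _ 1 (by simp [constantCoeff_qqPoch]), mul_one]

lemma qBinom_eq_zero {r n : ℕ} (h : r < n) : qBinom r n = 0 := by
  rw [qBinom, if_neg h.not_ge]

lemma qBinom_zero_right (r : ℕ) : qBinom r 0 = 1 := by
  apply mul_left_cancel₀ (qqPoch_ne_zero r)
  simpa [qqPoch_zero] using qqPoch_mul_qqPoch_mul_qBinom (zero_add r)

lemma qBinom_self (r : ℕ) : qBinom r r = 1 := by
  apply mul_left_cancel₀ (qqPoch_ne_zero r)
  simpa [qqPoch_zero] using qqPoch_mul_qqPoch_mul_qBinom (add_zero r)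

lemma qBinom_add_succ_succ (k l : ℕ) :
    qBinom (k + l + 2) (k + 1) =
      qBinom (k + l + 1) (k + 1) + X ^ (l + 1) * qBinom (k + l + 1) k := by
  apply mul_left_cancel₀ (mul_ne_zero (qqPoch_ne_zero (k + 1)) (qqPoch_ne_zero (l + 1)))
  have h := qqPoch_mul_qqPoch_mul_qBinom (k := k + 1) (l := l + 1) (r := k + l + 2) (by ring)
  have h₁ := qqPoch_mul_qqPoch_mul_qBinom (k := k + 1) (l := l) (r := k + l + 1) (by ring)
  have h₂ := qqPoch_mul_qqPoch_mul_qBinom (k := k) (l := l + 1) (r := k + l + 1) (by ring)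
  rw [qqPoch_succ (k + l + 1)] at h
  simp only [qqPoch_succ k, qqPoch_succ l] at h h₁ h₂ ⊢
  linear_combination h - (1 - X ^ (l + 1)) * h₁ - X ^ (l + 1) * (1 - X ^ (k + 1)) * h₂

lemma qBinom_succ_succ (r n : ℕ) :
    qBinom (r + 1) (n + 1) = qBinom r (n + 1) + X ^ (r - n) * qBinom r n := by
  rcases lt_trichotomy r n with hlt | rfl | hgt
  · rw [qBinom_eq_zero (by omega), qBinom_eq_zero (by omega), qBinom_eq_zero hlt, mul_zero,
      add_zero]
  · rw [qBinom_self, qBinom_eq_zero (Nat.lt_succ_self r), qBinom_self, Nat.sub_self, pow_zero,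
      mul_one, zero_add]
  · obtain ⟨l, rfl⟩ := Nat.exists_eq_add_of_lt hgt
    rw [show n + l + 1 - n = l + 1 by omega]
    exact qBinom_add_succ_succ n l

def schurTerm (m n : ℕ) : PowerSeries ℤ :=
  X ^ (n ^ 2) * qBinom (m - n) n

lemma schurTerm_zero_right (m : ℕ) : schurTerm m 0 = 1 := by
  simp [schurTerm, qBinom_zero_right]

lemma schurTerm_eq_zero {m n : ℕ} (h : m < 2 * n) : schurTerm m n = 0 := by
  rw [schurTerm, qBinom_eq_zero (by omega), mul_zero]

lemma schurTerm_succ_succ (k n : ℕ) :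
    schurTerm (k + 2) (n + 1) = schurTerm (k + 1) (n + 1) + X ^ (k + 1) * schurTerm k n := by
  by_cases hn : 2 * n ≤ k
  · obtain ⟨l, rfl⟩ := Nat.exists_eq_add_of_le hn
    have hq := qBinom_succ_succ (n + l) n
    rw [Nat.add_sub_cancel_left] at hq
    rw [schurTerm, schurTerm, schurTerm, show 2 * n + l + 2 - (n + 1) = n + l + 1 by omega,
      show 2 * n + l + 1 - (n + 1) = n + l by omega, show 2 * n + l - n = n + l by omega, hq]
    ring
  · rw [schurTerm_eq_zero (m := k) (by omega), schurTerm_eq_zero (by omega),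
      schurTerm_eq_zero (by omega), mul_zero, add_zero]

lemma schurA_eq_sum_schurTerm {m N : ℕ} (h : m < N) :
    schurA m = ∑ n ∈ range N, schurTerm m n := by
  refine sum_subset (range_subset_range.2 h) fun n hN hm ↦ schurTerm_eq_zero ?_
  simp only [mem_range] at hN hm
  omega

/-- Schur's recurrence: `A₀ = 1`, `A₁ = 1`, and `A_m = A_{m−1} + q^{m−1} A_{m−2}`
for all `m ≥ 2`. -/
theorem schurA_recurrence :
    schurA 0 = 1 ∧ schurA 1 = 1 ∧
    ∀ m : ℕ, 2 ≤ m →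
      schurA m = schurA (m - 1) +
        (PowerSeries.X : PowerSeries ℤ) ^ (m - 1) * schurA (m - 2) := by
  refine ⟨?_, ?_, fun m hm ↦ ?_⟩
  · rw [schurA_eq_sum_schurTerm (N := 1) one_pos, sum_range_one, schurTerm_zero_right]
  · rw [schurA_eq_sum_schurTerm (N := 2) one_lt_two, sum_range_succ, sum_range_one,
      schurTerm_zero_right, schurTerm_eq_zero (by norm_num), add_zero]
  obtain ⟨k, rfl⟩ := Nat.exists_eq_add_of_le' hm
  rw [Nat.add_sub_cancel, show k + 2 - 1 = k + 1 by omega,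
    schurA_eq_sum_schurTerm (N := k + 3) (by omega),
    schurA_eq_sum_schurTerm (N := k + 3) (by omega),
    schurA_eq_sum_schurTerm (N := k + 2) (by omega), sum_range_succ', sum_range_succ' _ (k + 2)]
  simp only [schurTerm_succ_succ, sum_add_distrib, ← mul_sum, schurTerm_zero_right]
  ring
end
end

section
/- Eisenstein expression of the Rogers–Ramanujan Lambert series: for every q ∈ ℂ with |q| < 1, S₁(q) + S₄(q) + 1/12 = −E₊(q)/48 + E_χ(q)/2 and S₂(q) + S₃(q) + 1/12 = −E₊(q)/48 − E_χ(q)/2. -/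
/-!
Expanding `1 / (1 - qⁿ)` geometrically, a Lambert series `∑ aₙ qⁿ / (1 - qⁿ)` with `aₙ = O(n)`
becomes the absolutely convergent double series `∑_{n,j ≥ 1} aₙ q^{nj}`; summing it along the
fibres of `(n, j) ↦ nj` gives the power series `∑ₘ (∑_{d ∣ m} a_d) qᵐ`, which is linear in `a`.
`S_r` is the Lambert series of `n ↦ n·[n ≡ r mod 5]`; for `r = 0` it equals `5 ∑ σ₁(m) q^{5m}`.
Checking residues mod 5, `2·[n ≡ ±1] + [5 ∣ n] = 1 + χ(n)` and `2·[n ≡ ±2] + [5 ∣ n] = 1 - χ(n)`,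
so `2 (S₁ + S₄) + S₀ = ∑ σ₁(m) qᵐ + E_χ` and `2 (S₂ + S₃) + S₀ = ∑ σ₁(m) qᵐ - E_χ`, while
`E₊ = 24 S₀ - 24 ∑ σ₁(m) qᵐ - 4`.
-/

noncomputable section

instance : Fact (Nat.Prime 5) := ⟨by norm_num⟩

/-- The Lambert series `S_r(q) = Σ_{k≥0} (5k+r) q^{5k+r}/(1 - q^{5k+r})`. -/
def lambertS (r : ℕ) (q : ℂ) : ℂ :=
  ∑' k : ℕ, ((5 * k + r : ℕ) : ℂ) * q ^ (5 * k + r) / (1 - q ^ (5 * k + r))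

/-- `σ₁(m) = Σ_{d∣m} d`. -/
def sigma1 (m : ℕ) : ℕ := ∑ d ∈ m.divisors, d

/-- The quadratic character mod `5` (the Legendre symbol mod 5). -/
def chi5 (d : ℕ) : ℤ := legendreSym 5 (d : ℤ)

/-- `E₊(q) = (1 − 24 Σ_{m≥1} σ₁(m) q^m) − 5 (1 − 24 Σ_{m≥1} σ₁(m) q^{5m})`. -/
def Eplus (q : ℂ) : ℂ :=
  (1 - 24 * ∑' m : ℕ, ((sigma1 (m + 1) : ℂ)) * q ^ (m + 1)) -
    5 * (1 - 24 * ∑' m : ℕ, ((sigma1 (m + 1) : ℂ)) * q ^ (5 * (m + 1)))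

/-- `E_χ(q) = Σ_{m≥1} (Σ_{d∣m} χ(d) d) q^m`. -/
def Echi (q : ℂ) : ℂ :=
  ∑' m : ℕ, ((∑ d ∈ (m + 1).divisors, chi5 d * (d : ℤ) : ℤ) : ℂ) * q ^ (m + 1)

open Finset

lemma tsum_mul_add_eq_tsum_ite_mod {α : Type*} [AddCommMonoid α] [TopologicalSpace α]
    (f : ℕ → α) {N r : ℕ} (hr : r < N) :
    ∑' k, f (N * k + r) = ∑' n, if n % N = r then f n else 0 := by
  have hinj : Function.Injective fun k => N * k + r := fun k l h => by
    simpa [(Nat.zero_le r).trans_lt hr |>.ne'] using h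
  have hsupp : Function.support (fun n => if n % N = r then f n else 0) ⊆ Set.range
      fun k => N * k + r := by
    intro n hn
    have hmod : n % N = r := by by_contra h; simp [h] at hn
    exact ⟨n / N, by simp only; rw [← hmod, Nat.div_add_mod]⟩
  rw [← hinj.tsum_eq hsupp]
  refine tsum_congr fun k => ?_
  rw [if_pos (by simp [Nat.mod_eq_of_lt hr])]

section LambertSeries

variable {𝕜 : Type*} [NormedField 𝕜]

def divisorSeries (q : 𝕜) : (ℕ → 𝕜) →ₗ[𝕜] ℕ → 𝕜 where
  toFun a m := (∑ d ∈ (m + 1).divisors, a d) * q ^ (m + 1)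
  map_add' a b := by ext m; simp only [Pi.add_apply, sum_add_distrib, add_mul]
  map_smul' c a := by
    ext m; simp only [Pi.smul_apply, smul_eq_mul, RingHom.id_apply, ← mul_sum, mul_assoc]

@[simp]
lemma divisorSeries_apply (q : 𝕜) (a : ℕ → 𝕜) (m : ℕ) :
    divisorSeries q a m = (∑ d ∈ (m + 1).divisors, a d) * q ^ (m + 1) :=
  rfl

lemma hasSum_ite_mul_pow {x : 𝕜} (hx : ‖x‖ < 1) (c : 𝕜) :
    HasSum (fun j : ℕ => if j = 0 then 0 else c * x ^ j) (c * x / (1 - x)) := by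
  rw [← hasSum_nat_add_iff' 1]
  have := (hasSum_geometric_of_norm_lt_one hx).mul_left (c * x)
  simpa [pow_succ', mul_assoc, div_eq_mul_inv] using this

lemma tsum_fiber_mul_ite_mul_pow (a : ℕ → 𝕜) (q : 𝕜) (m : ℕ) :
    ∑' p : (fun p : ℕ × ℕ => p.1 * p.2) ⁻¹' {m + 1},
        (if p.1.2 = 0 then 0 else a p.1.1 * q ^ (p.1.1 * p.1.2)) =
      (∑ d ∈ (m + 1).divisors, a d) * q ^ (m + 1) := by
  have hfiber : (fun p : ℕ × ℕ => p.1 * p.2) ⁻¹' {m + 1} = (m + 1).divisorsAntidiagonal := by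
    ext p; simp [Nat.mem_divisorsAntidiagonal]
  rw [hfiber, tsum_subtype' _ fun p : ℕ × ℕ => if p.2 = 0 then 0 else a p.1 * q ^ (p.1 * p.2),
    ← Nat.sum_divisorsAntidiagonal (fun d _ => a d), sum_mul]
  refine sum_congr rfl fun p hp => ?_
  obtain ⟨hmul, -⟩ := Nat.mem_divisorsAntidiagonal.mp hp
  rw [if_neg (right_ne_zero_of_mul (hmul.trans_ne m.succ_ne_zero)), hmul]

variable [CompleteSpace 𝕜] {q : 𝕜} {a : ℕ → 𝕜} {C : ℝ}

lemma summable_ite_mul_pow_mul (hq : ‖q‖ < 1) (ha : ∀ n, ‖a n‖ ≤ C * n) :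
    Summable fun p : ℕ × ℕ => if p.2 = 0 then 0 else a p.1 * q ^ (p.1 * p.2) := by
  have hr : Summable fun n : ℕ => C * n * ‖q‖ ^ n := by
    simpa [mul_assoc] using
      (summable_pow_mul_geometric_of_norm_lt_one (R := ℝ) 1 (by simpa using hq)).mul_left C
  have hC : 0 ≤ C := by simpa using (norm_nonneg (a 1)).trans (ha 1)
  have hg : Summable fun j : ℕ => ‖q‖ ^ (j - 1) :=
    (summable_nat_add_iff 1).mp (by simpa using summable_geometric_of_lt_one (norm_nonneg q) hq)
  refine Summable.of_norm_bounded
    (hr.mul_of_nonneg hg (fun n => by positivity) (fun j => by positivity)) ?_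
  rintro ⟨n, _ | j⟩
  · simp only [if_pos, norm_zero]
    positivity
  rcases eq_or_ne n 0 with rfl | hn
  · simpa using ha 0
  calc ‖a n * q ^ (n * (j + 1))‖ = ‖a n‖ * ‖q‖ ^ (n * (j + 1)) := by rw [norm_mul, norm_pow]
    _ ≤ C * n * (‖q‖ ^ n * ‖q‖ ^ j) := by
      have hexp : n + j ≤ n * (j + 1) := by nlinarith [Nat.one_le_iff_ne_zero.mpr hn]
      rw [← pow_add]
      exact mul_le_mul (ha n) (pow_le_pow_of_le_one (norm_nonneg q) hq.le hexp)
        (by positivity) (by positivity)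
    _ = C * n * ‖q‖ ^ n * ‖q‖ ^ (j + 1 - 1) := by simp [mul_assoc]

theorem hasSum_divisorSeries (hq : ‖q‖ < 1) (ha : ∀ n, ‖a n‖ ≤ C * n) :
    HasSum (divisorSeries q a) (∑' n, a n * q ^ n / (1 - q ^ n)) := by
  have ha0 : a 0 = 0 := norm_le_zero_iff.mp (by simpa using ha 0)
  set G : ℕ × ℕ → 𝕜 := fun p => if p.2 = 0 then 0 else a p.1 * q ^ (p.1 * p.2)
  have hG : HasSum G (∑' p, G p) := (summable_ite_mul_pow_mul hq ha).hasSum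
  have hrows : HasSum (fun n => a n * q ^ n / (1 - q ^ n)) (∑' p, G p) := by
    refine hG.prod_fiberwise fun n => ?_
    rcases eq_or_ne n 0 with rfl | hn
    · simp [G, ha0]
    · have hqn : ‖q ^ n‖ < 1 := by simpa using pow_lt_one₀ (norm_nonneg q) hq hn
      simpa [G, pow_mul, mul_div_assoc] using hasSum_ite_mul_pow hqn (a n)
  have hfibers := (hasSum_nat_add_iff' 1).mpr (hG.tsum_fiberwise fun p => p.1 * p.2)
  have hfiber0 : ∑' p : (fun p : ℕ × ℕ => p.1 * p.2) ⁻¹' {0}, G p = 0 := by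
    refine (tsum_congr fun p => ?_).trans tsum_zero
    obtain ⟨⟨n, j⟩, hp⟩ := p
    rcases Nat.mul_eq_zero.mp hp with rfl | rfl <;> simp [G, ha0]
  have hseries :
      divisorSeries q a = fun m => ∑' p : (fun p : ℕ × ℕ => p.1 * p.2) ⁻¹' {m + 1}, G p :=
    funext fun m => (tsum_fiber_mul_ite_mul_pow a q m).symm
  rw [hrows.tsum_eq, hseries]
  simpa [hfiber0] using hfibers

end LambertSeries

def residueCoeff (r n : ℕ) : ℂ := if n % 5 = r then n else 0

lemma norm_residueCoeff_le (r n : ℕ) : ‖residueCoeff r n‖ ≤ 1 * n := by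
  unfold residueCoeff; split_ifs <;> simp

lemma lambertS_eq_tsum_residueCoeff (q : ℂ) {r : ℕ} (hr : r < 5) :
    lambertS r q = ∑' n, residueCoeff r n * q ^ n / (1 - q ^ n) := by
  rw [lambertS, tsum_mul_add_eq_tsum_ite_mod (fun n : ℕ => (n : ℂ) * q ^ n / (1 - q ^ n)) hr]
  simp only [residueCoeff, ite_mul, ite_div, zero_mul, zero_div]

lemma five_mul_lambert_pow_five (q : ℂ) :
    5 * ∑' n : ℕ, (n : ℂ) * (q ^ 5) ^ n / (1 - (q ^ 5) ^ n) = lambertS 0 q := by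
  rw [lambertS, ← tsum_mul_left]
  refine tsum_congr fun n => ?_
  push_cast
  rw [← pow_mul, add_zero]
  ring

lemma tsum_sigma1_mul_pow {q : ℂ} (hq : ‖q‖ < 1) :
    ∑' m, (sigma1 (m + 1) : ℂ) * q ^ (m + 1) = ∑' n : ℕ, (n : ℂ) * q ^ n / (1 - q ^ n) := by
  refine Eq.trans ?_ (hasSum_divisorSeries hq (a := fun n => (n : ℂ)) (C := 1) (by simp)).tsum_eq
  refine tsum_congr fun m => ?_
  simp [sigma1]

lemma Eplus_eq {q : ℂ} (hq : ‖q‖ < 1) :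
    Eplus q = 24 * lambertS 0 q - 24 * ∑' n : ℕ, (n : ℂ) * q ^ n / (1 - q ^ n) - 4 := by
  have hq5 : ‖q ^ 5‖ < 1 := by simpa using pow_lt_one₀ (norm_nonneg q) hq (by norm_num)
  have h5 : ∑' m, (sigma1 (m + 1) : ℂ) * q ^ (5 * (m + 1)) =
      ∑' n : ℕ, (n : ℂ) * (q ^ 5) ^ n / (1 - (q ^ 5) ^ n) := by
    simpa only [← pow_mul] using tsum_sigma1_mul_pow hq5
  rw [Eplus, tsum_sigma1_mul_pow hq, h5]
  linear_combination 24 * five_mul_lambert_pow_five q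

lemma Echi_eq_tsum_divisorSeries (q : ℂ) :
    Echi q = ∑' m, divisorSeries q (fun n => (chi5 n : ℂ) * n) m := by
  rw [Echi]
  refine tsum_congr fun m => ?_
  simp

lemma chi5_eq (d : ℕ) :
    chi5 d = if d % 5 = 1 ∨ d % 5 = 4 then 1 else if d % 5 = 2 ∨ d % 5 = 3 then -1 else 0 := by
  rw [chi5, legendreSym.mod, ← Int.natCast_mod]
  have h5 : d % 5 < 5 := Nat.mod_lt d (by norm_num)
  interval_cases d % 5 <;> decide

lemma chi5_mul_eq_residueCoeff_one_four :
    (fun d : ℕ => (chi5 d : ℂ) * d) =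
      (2 : ℂ) • residueCoeff 1 + (2 : ℂ) • residueCoeff 4 + residueCoeff 0 -
        fun d : ℕ => (d : ℂ) := by
  funext d
  have h5 : d % 5 < 5 := Nat.mod_lt d (by norm_num)
  simp only [Pi.sub_apply, Pi.add_apply, Pi.smul_apply, smul_eq_mul, chi5_eq, residueCoeff]
  interval_cases d % 5 <;> norm_num <;> ring

lemma chi5_mul_eq_residueCoeff_two_three :
    (fun d : ℕ => (chi5 d : ℂ) * d) =
      (fun d : ℕ => (d : ℂ)) -
        ((2 : ℂ) • residueCoeff 2 + (2 : ℂ) • residueCoeff 3 + residueCoeff 0) := by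
  funext d
  have h5 : d % 5 < 5 := Nat.mod_lt d (by norm_num)
  simp only [Pi.sub_apply, Pi.add_apply, Pi.smul_apply, smul_eq_mul, chi5_eq, residueCoeff]
  interval_cases d % 5 <;> norm_num <;> ring

/-- Eisenstein expression of the Rogers–Ramanujan Lambert series:
`S₁ + S₄ + 1/12 = −E₊/48 + E_χ/2` and `S₂ + S₃ + 1/12 = −E₊/48 − E_χ/2`. -/
theorem lambert_eisenstein_expression (q : ℂ) (hq : ‖q‖ < 1) :
    lambertS 1 q + lambertS 4 q + 1 / 12 = -Eplus q / 48 + Echi q / 2 ∧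
    lambertS 2 q + lambertS 3 q + 1 / 12 = -Eplus q / 48 - Echi q / 2 := by
  set Λ := ∑' n : ℕ, (n : ℂ) * q ^ n / (1 - q ^ n)
  have hΛ : HasSum (divisorSeries q fun n => (n : ℂ)) Λ :=
    hasSum_divisorSeries hq (C := 1) (by simp)
  have hS (r : ℕ) (hr : r < 5 := by norm_num) :
      HasSum (divisorSeries q (residueCoeff r)) (lambertS r q) := by
    simpa only [lambertS_eq_tsum_residueCoeff q hr] using
      hasSum_divisorSeries hq (norm_residueCoeff_le r)
  have hχ14 : HasSum (divisorSeries q fun d => (chi5 d : ℂ) * d)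
      (2 * lambertS 1 q + 2 * lambertS 4 q + lambertS 0 q - Λ) := by
    rw [chi5_mul_eq_residueCoeff_one_four, map_sub, map_add, map_add, map_smul, map_smul]
    exact ((((hS 1).const_smul (2 : ℂ)).add ((hS 4).const_smul (2 : ℂ))).add (hS 0)).sub hΛ
  have hχ23 : HasSum (divisorSeries q fun d => (chi5 d : ℂ) * d)
      (Λ - (2 * lambertS 2 q + 2 * lambertS 3 q + lambertS 0 q)) := by
    rw [chi5_mul_eq_residueCoeff_two_three, map_sub, map_add, map_add, map_smul, map_smul]
    exact hΛ.sub ((((hS 2).const_smul (2 : ℂ)).add ((hS 3).const_smul (2 : ℂ))).add (hS 0))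
  rw [Eplus_eq hq, Echi_eq_tsum_divisorSeries]
  constructor
  · rw [hχ14.tsum_eq]; ring
  · rw [hχ23.tsum_eq]; ring
end
end

section
/- The local fundamental matrix at the cusp 0 is invertible near 0: there exists ε with 0 < ε < 1 such that for every τ in the upper half-plane ℍ with |e^{−2πi/τ}| < ε, the determinant f₁(−1/τ)·f₂(−1/τ − 1) − f₂(−1/τ)·f₁(−1/τ − 1) is nonzero. -/
/-!
For `‖q‖ < 1/3` the Pochhammer symbols `(q;q)_n` stay uniformly away from `0`, so the terms of
`G(q)` and `H(q)` after the constant term `1` have total size `< 1`, and neither series vanishes.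
Since `e^{2πi(τ-1)} = e^{2πiτ}`, shifting `τ` by `-1` only multiplies `f₁` and `f₂` by the roots of
unity `e^{2πi/60}` and `e^{-22πi/60}`; hence the determinant is `f₁ f₂ (e^{-22πi/60} - e^{2πi/60})`
at `-1/τ`, and the bracket is nonzero because `e^{2πi/5} ≠ 1`.
-/

noncomputable section

/-- The finite q-Pochhammer symbol `(a;q)_n = ∏_{j=0}^{n-1} (1 - a q^j)`. -/
def qPoch (a q : ℂ) (n : ℕ) : ℂ := ∏ j ∈ Finset.range n, (1 - a * q ^ j)

/-- The first Rogers–Ramanujan series `G(q) = Σ_{n≥0} q^{n²}/(q;q)_n`. -/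
def RRG (q : ℂ) : ℂ := ∑' n : ℕ, q ^ (n ^ 2) / qPoch q q n

/-- The second Rogers–Ramanujan series `H(q) = Σ_{n≥0} q^{n(n+1)}/(q;q)_n`. -/
def RRH (q : ℂ) : ℂ := ∑' n : ℕ, q ^ (n * (n + 1)) / qPoch q q n

/-- `f₁(τ) = q^{-1/60} G(q)` with `q = e^{2πiτ}`. -/
def f₁ (τ : ℂ) : ℂ :=
  Complex.exp (2 * (Real.pi : ℂ) * Complex.I * (-(1 : ℂ) / 60) * τ) *
    RRG (Complex.exp (2 * (Real.pi : ℂ) * Complex.I * τ))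

/-- `f₂(τ) = q^{11/60} H(q)` with `q = e^{2πiτ}`. -/
def f₂ (τ : ℂ) : ℂ :=
  Complex.exp (2 * (Real.pi : ℂ) * Complex.I * ((11 : ℂ) / 60) * τ) *
    RRH (Complex.exp (2 * (Real.pi : ℂ) * Complex.I * τ))

open Complex
open scoped Real

theorem one_sub_sum_le_prod_one_sub {ι R : Type*} [CommRing R] [LinearOrder R]
    [IsStrictOrderedRing R] (s : Finset ι) {f : ι → R} (hf : ∀ i ∈ s, 0 ≤ f i ∧ f i ≤ 1) :
    1 - ∑ i ∈ s, f i ≤ ∏ i ∈ s, (1 - f i) := by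
  classical
  induction s using Finset.induction_on with
  | empty => simp
  | insert i s hi ih =>
    obtain ⟨hfi₀, hfi₁⟩ := hf i (Finset.mem_insert_self i s)
    have hs := fun j hj => hf j (Finset.mem_insert_of_mem hj)
    have hsum : 0 ≤ ∑ j ∈ s, f j := Finset.sum_nonneg fun j hj => (hs j hj).1
    rw [Finset.prod_insert hi, Finset.sum_insert hi]
    nlinarith [ih hs]

theorem one_sub_div_le_norm_qPoch {a q : ℂ} (ha : ‖a‖ ≤ 1) (hq : ‖q‖ < 1) (n : ℕ) :
    1 - ‖a‖ / (1 - ‖q‖) ≤ ‖qPoch a q n‖ := by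
  have hterm : ∀ j, ‖a * q ^ j‖ = ‖a‖ * ‖q‖ ^ j := fun j => by rw [norm_mul, norm_pow]
  have hterm_le_one : ∀ j, ‖a‖ * ‖q‖ ^ j ≤ 1 := fun j =>
    mul_le_one₀ ha (pow_nonneg (norm_nonneg q) j) (pow_le_one₀ (norm_nonneg q) hq.le)
  have hgeom : ∑ j ∈ Finset.range n, ‖a‖ * ‖q‖ ^ j ≤ ‖a‖ / (1 - ‖q‖) := by
    rw [← Finset.mul_sum, ← mul_one_div, Finset.range_eq_Ico]
    refine mul_le_mul_of_nonneg_left ?_ (norm_nonneg a)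
    simpa using geom_sum_Ico_le_of_lt_one (m := 0) (n := n) (norm_nonneg q) hq
  calc 1 - ‖a‖ / (1 - ‖q‖) ≤ 1 - ∑ j ∈ Finset.range n, ‖a‖ * ‖q‖ ^ j := by linarith
    _ ≤ ∏ j ∈ Finset.range n, (1 - ‖a‖ * ‖q‖ ^ j) :=
      one_sub_sum_le_prod_one_sub _ fun j _ => ⟨by positivity, hterm_le_one j⟩
    _ ≤ ∏ j ∈ Finset.range n, ‖1 - a * q ^ j‖ := by
      refine Finset.prod_le_prod (fun j _ => sub_nonneg.2 (hterm_le_one j)) fun j _ => ?_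
      simpa [hterm] using norm_sub_norm_le (1 : ℂ) (a * q ^ j)
    _ = ‖qPoch a q n‖ := by rw [qPoch, norm_prod]

theorem tsum_ne_zero_of_tsum_norm_succ_lt {E : Type*} [NormedAddCommGroup E] [CompleteSpace E]
    {a : ℕ → E} (ha : Summable fun n => ‖a n‖) (htail : ∑' n, ‖a (n + 1)‖ < ‖a 0‖) :
    ∑' n, a n ≠ 0 := by
  intro hzero
  have htail_summable : Summable fun n => ‖a (n + 1)‖ :=
    ha.comp_injective (add_left_injective 1)
  have ha0 : a 0 = -∑' n, a (n + 1) := by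
    rw [eq_neg_iff_add_eq_zero, ← hzero, ha.of_norm.tsum_eq_zero_add]
  have : ‖a 0‖ ≤ ∑' n, ‖a (n + 1)‖ := by
    rw [ha0, norm_neg]
    exact norm_tsum_le_tsum_norm htail_summable
  linarith

theorem tsum_pow_div_qPoch_ne_zero {q : ℂ} (hq : ‖q‖ < 1 / 3) {e : ℕ → ℕ} (he₀ : e 0 = 0)
    (he : ∀ n, n ≤ e n) : ∑' n, q ^ e n / qPoch q q n ≠ 0 := by
  set r := ‖q‖
  have hr₀ : 0 ≤ r := norm_nonneg q
  have hr₁ : r < 1 := by linarith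
  -- `1 - s` bounds `‖(q;q)_n‖` below, and `s / (1 - s) < 1` bounds the tail.
  set s := r / (1 - r)
  have hs : s < 1 / 2 := by rw [div_lt_iff₀ (by linarith)]; linarith
  have hterm : ∀ n, ‖q ^ e n / qPoch q q n‖ ≤ (1 - s)⁻¹ * r ^ n := fun n => by
    rw [norm_div, norm_pow, ← div_eq_inv_mul]
    exact div_le_div₀ (pow_nonneg hr₀ n) (pow_le_pow_of_le_one hr₀ hr₁.le (he n))
      (by linarith) (one_sub_div_le_norm_qPoch hr₁.le hr₁ n)
  have hgeom := summable_geometric_of_lt_one hr₀ hr₁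
  refine tsum_ne_zero_of_tsum_norm_succ_lt
    (.of_nonneg_of_le (fun _ => norm_nonneg _) hterm (hgeom.mul_left _)) ?_
  calc ∑' n, ‖q ^ e (n + 1) / qPoch q q (n + 1)‖
      ≤ ∑' n, (1 - s)⁻¹ * r * r ^ n := by
        refine Summable.tsum_le_tsum (fun n => (hterm (n + 1)).trans_eq (by ring)) ?_
          (hgeom.mul_left _)
        exact .of_nonneg_of_le (fun _ => norm_nonneg _) (fun n => hterm (n + 1))
          ((hgeom.mul_left _).comp_injective (add_left_injective 1))
    _ = s / (1 - s) := by
        rw [tsum_mul_left, tsum_geometric_of_lt_one hr₀ hr₁, ← div_eq_mul_inv, ← div_eq_inv_mul,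
          div_right_comm]
    _ < 1 := by rw [div_lt_one (by linarith)]; linarith
    _ = ‖q ^ e 0 / qPoch q q 0‖ := by simp [he₀, qPoch]

theorem RRG_ne_zero {q : ℂ} (hq : ‖q‖ < 1 / 3) : RRG q ≠ 0 :=
  tsum_pow_div_qPoch_ne_zero hq (by norm_num) fun n => Nat.le_self_pow two_ne_zero n

theorem RRH_ne_zero {q : ℂ} (hq : ‖q‖ < 1 / 3) : RRH q ≠ 0 :=
  tsum_pow_div_qPoch_ne_zero hq (by norm_num) fun n => Nat.le_mul_of_pos_right n n.succ_pos

theorem f₁_ne_zero {τ : ℂ} (hq : ‖exp (2 * π * I * τ)‖ < 1 / 3) : f₁ τ ≠ 0 :=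
  mul_ne_zero (exp_ne_zero _) (RRG_ne_zero hq)

theorem f₂_ne_zero {τ : ℂ} (hq : ‖exp (2 * π * I * τ)‖ < 1 / 3) : f₂ τ ≠ 0 :=
  mul_ne_zero (exp_ne_zero _) (RRH_ne_zero hq)

theorem exp_two_pi_I_mul_sub_one (τ : ℂ) : exp (2 * π * I * (τ - 1)) = exp (2 * π * I * τ) := by
  rw [mul_sub, mul_one, exp_sub, exp_two_pi_mul_I, div_one]

theorem f₁_sub_one (τ : ℂ) : f₁ (τ - 1) = exp (2 * π * I / 60) * f₁ τ := by
  rw [f₁, f₁, exp_two_pi_I_mul_sub_one, ← mul_assoc, ← exp_add]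
  ring_nf

theorem f₂_sub_one (τ : ℂ) : f₂ (τ - 1) = exp (-(2 * π * I * 11 / 60)) * f₂ τ := by
  rw [f₂, f₂, exp_two_pi_I_mul_sub_one, ← mul_assoc, ← exp_add]
  ring_nf

theorem exp_neg_eleven_sixtieths_ne_exp_one_sixtieth :
    exp (-(2 * π * I * 11 / 60)) ≠ exp (2 * π * I / 60) := by
  intro h
  have hζ : exp (2 * π * I / 5) * exp (-(2 * π * I * 11 / 60)) = exp (2 * π * I / 60) := by
    rw [← exp_add]
    ring_nf
  rw [h, mul_left_eq_self₀] at hζ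
  exact hζ.elim (by exact_mod_cast (isPrimitiveRoot_exp 5 (by norm_num)).ne_one (by norm_num))
    (exp_ne_zero _)

/-- Invertibility of the local fundamental matrix at the cusp `0`: there is
`0 < ε < 1` such that whenever `τ ∈ ℍ` and `|e^{−2πi/τ}| < ε`, the determinant
`f₁(−1/τ) f₂(−1/τ − 1) − f₂(−1/τ) f₁(−1/τ − 1)` is nonzero. -/
theorem fundamental_matrix_invertible_near_zero :
    ∃ ε : ℝ, 0 < ε ∧ ε < 1 ∧
      ∀ τ : ℂ, 0 < τ.im →
        ‖Complex.exp (-(2 * (Real.pi : ℂ) * Complex.I) / τ)‖ < ε →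
        f₁ (-1 / τ) * f₂ (-1 / τ - 1) - f₂ (-1 / τ) * f₁ (-1 / τ - 1) ≠ 0 := by
  refine ⟨1 / 3, by norm_num, by norm_num, fun τ _ hε => ?_⟩
  have hq : ‖exp (2 * π * I * (-1 / τ))‖ < 1 / 3 := by
    rwa [show 2 * π * I * (-1 / τ) = -(2 * π * I) / τ by ring]
  have hdet : f₁ (-1 / τ) * f₂ (-1 / τ - 1) - f₂ (-1 / τ) * f₁ (-1 / τ - 1) =
      f₁ (-1 / τ) * f₂ (-1 / τ) * (exp (-(2 * π * I * 11 / 60)) - exp (2 * π * I / 60)) := by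
    rw [f₁_sub_one, f₂_sub_one]
    ring
  rw [hdet]
  exact mul_ne_zero (mul_ne_zero (f₁_ne_zero hq) (f₂_ne_zero hq))
    (sub_ne_zero.2 exp_neg_eleven_sixtieths_ne_exp_one_sixtieth)
end
end
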